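/- Assume 2 = p < q < N, q/2 < 1 + 1/N, μ Lipschitz nonnegative, and f satisfies (H), (U1), (U2) with c_1 λ_{1,2}^{-1} + c_2 λ_{1,2}^{-1/2} < 1. Then the double phase problem −div(∇u + μ(x)|∇u|^{q−2}∇u) = f(x,u,∇u) in Ω, u = 0 on ∂Ω, admits at most one weak solution u ∈ W_0^{1,H}(Ω). -/

import Mathlib

open MeasureTheory Real

/-- `u` has `g` as a weak gradient (against smooth compactly supported test functions). -/
def IsWeakGrad {N : ℕ} (u : EuclideanSpace ℝ (Fin N) → ℝ)
    (g : EuclideanSpace ℝ (Fin N) → EuclideanSpace ℝ (Fin N)) : Prop :=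
  ∀ φ : EuclideanSpace ℝ (Fin N) → ℝ, ContDiff ℝ (⊤ : ℕ∞) φ → HasCompactSupport φ →
    ∀ i : Fin N,
      ∫ x, u x * fderiv ℝ φ x (EuclideanSpace.single i 1) = - ∫ x, g x i * φ x

/-- `(u, g)` represents an element of `W_0^{1,H}(Ω)` with weak gradient `g`. -/
def MemW0H {N : ℕ} (Ω : Set (EuclideanSpace ℝ (Fin N))) (p q : ℝ)
    (μ : EuclideanSpace ℝ (Fin N) → ℝ) (u : EuclideanSpace ℝ (Fin N) → ℝ)
    (g : EuclideanSpace ℝ (Fin N) → EuclideanSpace ℝ (Fin N)) : Prop :=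
  MeasureTheory.AEStronglyMeasurable u MeasureTheory.volume ∧
  MeasureTheory.AEStronglyMeasurable g MeasureTheory.volume ∧
  IsWeakGrad u g ∧
  (∀ᵐ x ∂MeasureTheory.volume, x ∉ Ω → u x = 0) ∧
  (∀ᵐ x ∂MeasureTheory.volume, x ∉ Ω → g x = 0) ∧
  MeasureTheory.IntegrableOn (fun x => |u x| ^ p + μ x * |u x| ^ q) Ω ∧
  MeasureTheory.IntegrableOn (fun x => ‖g x‖ ^ p + μ x * ‖g x‖ ^ q) Ω


section DPHelpers

lemma ab_le_sq_add_sq {a b : ℝ} (_ha : 0 ≤ a) (_hb : 0 ≤ b) : a * b ≤ a ^ 2 + b ^ 2 := by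
  nlinarith [sq_nonneg (a - b)]

lemma rpow_pred_mul_le {a b q : ℝ} (ha : 0 ≤ a) (hb : 0 ≤ b) (hq : 1 ≤ q) :
    a ^ (q - 1) * b ≤ a ^ q + b ^ q := by
  have hq1 : (0:ℝ) ≤ q - 1 := by linarith
  rcases le_total a b with h | h
  · have h1 : a ^ (q-1) * b ≤ b ^ (q-1) * b :=
      mul_le_mul_of_nonneg_right (Real.rpow_le_rpow ha h hq1) hb
    have h2 : b ^ (q-1) * b = b ^ q := by
      nth_rewrite 2 [← Real.rpow_one b]
      rw [← Real.rpow_add_of_nonneg hb hq1 zero_le_one]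
      norm_num
    have h3 : (0:ℝ) ≤ a ^ q := Real.rpow_nonneg ha q
    nlinarith
  · have h1 : a ^ (q-1) * b ≤ a ^ (q-1) * a :=
      mul_le_mul_of_nonneg_left h (Real.rpow_nonneg ha _)
    have h2 : a ^ (q-1) * a = a ^ q := by
      nth_rewrite 2 [← Real.rpow_one a]
      rw [← Real.rpow_add_of_nonneg ha hq1 zero_le_one]
      norm_num
    have h3 : (0:ℝ) ≤ b ^ q := Real.rpow_nonneg hb q
    nlinarith

lemma add_rpow_le_two_rpow {a b t : ℝ} (ha : 0 ≤ a) (hb : 0 ≤ b) (ht : 0 ≤ t) :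
    (a + b) ^ t ≤ 2 ^ t * (a ^ t + b ^ t) := by
  have hm : 0 ≤ max a b := le_trans ha (le_max_left a b)
  have h1 : a + b ≤ 2 * max a b := by
    rcases le_total a b with h | h
    · simp only [max_eq_right h]; linarith
    · simp only [max_eq_left h]; linarith
  calc (a + b) ^ t ≤ (2 * max a b) ^ t :=
        Real.rpow_le_rpow (by linarith) h1 ht
    _ = 2 ^ t * (max a b) ^ t := Real.mul_rpow (by norm_num) hm
    _ ≤ 2 ^ t * (a ^ t + b ^ t) := by
        apply mul_le_mul_of_nonneg_left _ (Real.rpow_nonneg (by norm_num) t)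
        rcases le_total a b with h | h
        · rw [max_eq_right h]
          exact le_add_of_nonneg_left (Real.rpow_nonneg ha t)
        · rw [max_eq_left h]
          exact le_add_of_nonneg_right (Real.rpow_nonneg hb t)

lemma rpow_sub_two_mul {x q : ℝ} (hx : 0 ≤ x) (hq : 2 < q) :
    x ^ (q - 2) * x = x ^ (q - 1) := by
  rcases eq_or_lt_of_le hx with h0 | hxpos
  · rw [← h0, Real.zero_rpow (by linarith), Real.zero_rpow (by linarith), zero_mul]
  · nth_rewrite 2 [← Real.rpow_one x]
    rw [← Real.rpow_add hxpos]
    congr 1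
    ring

open scoped RealInnerProductSpace in
lemma inner_rpow_smul_sub_nonneg {N : ℕ} (a b : EuclideanSpace ℝ (Fin N)) {r : ℝ} (hr : 0 ≤ r) :
    0 ≤ ⟪‖a‖ ^ r • a - ‖b‖ ^ r • b, a - b⟫ := by
  have hA : (0:ℝ) ≤ ‖a‖ := norm_nonneg a
  have hB : (0:ℝ) ≤ ‖b‖ := norm_nonneg b
  have ht : ⟪a, b⟫ ≤ ‖a‖ * ‖b‖ := real_inner_le_norm a b
  have hkey : 0 ≤ (‖a‖ ^ r * ‖a‖ - ‖b‖ ^ r * ‖b‖) * (‖a‖ - ‖b‖) := by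
    rcases le_total ‖a‖ ‖b‖ with h | h
    · have h1 : ‖a‖ ^ r * ‖a‖ - ‖b‖ ^ r * ‖b‖ ≤ 0 := by
        have := mul_le_mul (Real.rpow_le_rpow hA h hr) h hA (Real.rpow_nonneg hB r)
        linarith
      have h2 : ‖a‖ - ‖b‖ ≤ 0 := by linarith
      nlinarith
    · apply mul_nonneg
      · have := mul_le_mul (Real.rpow_le_rpow hB h hr) h hB (Real.rpow_nonneg hA r)
        linarith
      · linarith
  have expand : ⟪‖a‖ ^ r • a - ‖b‖ ^ r • b, a - b⟫
      = ‖a‖ ^ r * ⟪a,a⟫ - (‖a‖ ^ r + ‖b‖ ^ r) * ⟪a,b⟫ + ‖b‖ ^ r * ⟪b,b⟫ := by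
    simp only [inner_sub_left, inner_sub_right, real_inner_smul_left, real_inner_comm b a]
    ring
  rw [expand, real_inner_self_eq_norm_mul_norm, real_inner_self_eq_norm_mul_norm]
  have hco : 0 ≤ ‖a‖ ^ r + ‖b‖ ^ r :=
    add_nonneg (Real.rpow_nonneg hA r) (Real.rpow_nonneg hB r)
  nlinarith [mul_nonneg hco (sub_nonneg.2 ht)]

lemma measurable_caratheodory {N : ℕ}
    {f : EuclideanSpace ℝ (Fin N) → ℝ → EuclideanSpace ℝ (Fin N) → ℝ}
    (hfmeas : ∀ (s : ℝ) (ξ : EuclideanSpace ℝ (Fin N)), Measurable (fun x => f x s ξ))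
    (hfcont : ∀ x, Continuous (fun sξ : ℝ × EuclideanSpace ℝ (Fin N) => f x sξ.1 sξ.2))
    {u : EuclideanSpace ℝ (Fin N) → ℝ} {g : EuclideanSpace ℝ (Fin N) → EuclideanSpace ℝ (Fin N)}
    (hu : Measurable u) (hg : Measurable g) :
    Measurable fun x => f x (u x) (g x) := by
  have H : Measurable (Function.uncurry
      (fun (i : ℝ × EuclideanSpace ℝ (Fin N)) (x : EuclideanSpace ℝ (Fin N)) => f x i.1 i.2)) :=
    measurable_uncurry_of_continuous_of_measurable
      (fun x => hfcont x) (fun i => hfmeas i.1 i.2)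
  exact H.comp ((hu.prodMk hg).prodMk measurable_id)

lemma integrable_of_integrableOn_of_zero_off {N : ℕ} {Ω : Set (EuclideanSpace ℝ (Fin N))}
    (hΩm : MeasurableSet Ω) {h : EuclideanSpace ℝ (Fin N) → ℝ}
    (hint : IntegrableOn h Ω volume)
    (h0 : ∀ᵐ x ∂(volume : Measure (EuclideanSpace ℝ (Fin N))), x ∉ Ω → h x = 0) :
    Integrable h volume := by
  have hi : Integrable (Ω.indicator h) volume := (integrable_indicator_iff hΩm).2 hint
  apply hi.congr
  filter_upwards [h0] with x hx
  by_cases hxx : x ∈ Ω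
  · simp [Set.indicator_of_mem hxx]
  · simp [Set.indicator_of_notMem hxx, hx hxx]

lemma abs_apply_le_norm {N : ℕ} (y : EuclideanSpace ℝ (Fin N)) (i : Fin N) :
    |y i| ≤ ‖y‖ := by
  have h := abs_real_inner_le_norm (EuclideanSpace.single i (1:ℝ)) y
  rw [EuclideanSpace.inner_single_left, EuclideanSpace.norm_single] at h
  simpa using h

lemma integrable_mul_testfun {N : ℕ} {Ω : Set (EuclideanSpace ℝ (Fin N))}
    (hΩm : MeasurableSet Ω)
    {u : EuclideanSpace ℝ (Fin N) → ℝ} (hu : AEStronglyMeasurable u volume)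
    (hu2 : IntegrableOn (fun x => |u x| ^ 2) Ω volume)
    (hu0 : ∀ᵐ x ∂(volume : Measure (EuclideanSpace ℝ (Fin N))), x ∉ Ω → u x = 0)
    {ψ : EuclideanSpace ℝ (Fin N) → ℝ} (hψc : Continuous ψ) (hψs : HasCompactSupport ψ) :
    Integrable (fun x => u x * ψ x) volume := by
  have hglob : Integrable (fun x => |u x| ^ 2) volume := by
    apply integrable_of_integrableOn_of_zero_off hΩm hu2
    filter_upwards [hu0] with x hx h
    simp [hx h]
  have hψ2c : Continuous fun x => |ψ x| ^ 2 := by fun_prop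
  have hψ2s : HasCompactSupport fun x => |ψ x| ^ 2 :=
    hψs.comp_left (g := fun t : ℝ => |t| ^ 2) (by simp)
  have hψ2 : Integrable (fun x => |ψ x| ^ 2) volume :=
    hψ2c.integrable_of_hasCompactSupport hψ2s
  apply Integrable.mono' (hglob.add hψ2) (hu.mul hψc.aestronglyMeasurable)
  filter_upwards with x
  show ‖u x * ψ x‖ ≤ |u x| ^ 2 + |ψ x| ^ 2
  rw [Real.norm_eq_abs, abs_mul]
  exact ab_le_sq_add_sq (abs_nonneg _) (abs_nonneg _)

end DPHelpers

section DPHelpers2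

open scoped RealInnerProductSpace

variable {N : ℕ} {Ω : Set (EuclideanSpace ℝ (Fin N))}

lemma comp_aesm {gu : EuclideanSpace ℝ (Fin N) → EuclideanSpace ℝ (Fin N)}
    (hgu : AEStronglyMeasurable gu (volume : Measure (EuclideanSpace ℝ (Fin N))))
    (i : Fin N) : AEStronglyMeasurable (fun x => gu x i) volume :=
  (EuclideanSpace.proj i).continuous.comp_aestronglyMeasurable hgu

lemma comp_sq_int {gu : EuclideanSpace ℝ (Fin N) → EuclideanSpace ℝ (Fin N)}
    (hgu2 : IntegrableOn (fun x => ‖gu x‖ ^ 2) Ω volume)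
    (hgu : AEStronglyMeasurable gu (volume : Measure (EuclideanSpace ℝ (Fin N)))) (i : Fin N) :
    IntegrableOn (fun x => |gu x i| ^ 2) Ω volume := by
  apply Integrable.mono' hgu2 ?_ ?_
  · exact ((comp_aesm hgu i).restrict).norm.pow 2
  · filter_upwards with x
    have h1 := abs_apply_le_norm (gu x) i
    rw [Real.norm_eq_abs, abs_of_nonneg (by positivity)]
    nlinarith [abs_nonneg (gu x i), norm_nonneg (gu x)]

lemma isWeakGrad_sub (hΩm : MeasurableSet Ω)
    {u v : EuclideanSpace ℝ (Fin N) → ℝ}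
    {gu gv : EuclideanSpace ℝ (Fin N) → EuclideanSpace ℝ (Fin N)}
    (hu : AEStronglyMeasurable u volume) (hv : AEStronglyMeasurable v volume)
    (hgu : AEStronglyMeasurable gu volume) (hgv : AEStronglyMeasurable gv volume)
    (hu2 : IntegrableOn (fun x => |u x| ^ 2) Ω volume)
    (hv2 : IntegrableOn (fun x => |v x| ^ 2) Ω volume)
    (hgu2 : IntegrableOn (fun x => ‖gu x‖ ^ 2) Ω volume)
    (hgv2 : IntegrableOn (fun x => ‖gv x‖ ^ 2) Ω volume)
    (hu0 : ∀ᵐ x ∂(volume : Measure (EuclideanSpace ℝ (Fin N))), x ∉ Ω → u x = 0)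
    (hv0 : ∀ᵐ x ∂(volume : Measure (EuclideanSpace ℝ (Fin N))), x ∉ Ω → v x = 0)
    (hgu0 : ∀ᵐ x ∂(volume : Measure (EuclideanSpace ℝ (Fin N))), x ∉ Ω → gu x = 0)
    (hgv0 : ∀ᵐ x ∂(volume : Measure (EuclideanSpace ℝ (Fin N))), x ∉ Ω → gv x = 0)
    (hwu : IsWeakGrad u gu) (hwv : IsWeakGrad v gv) :
    IsWeakGrad (fun x => u x - v x) (fun x => gu x - gv x) := by
  intro φ hφ hφc i
  set ψ : EuclideanSpace ℝ (Fin N) → ℝ := fun x => fderiv ℝ φ x (EuclideanSpace.single i 1)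
    with hψdef
  have hψcont : Continuous ψ := (hφ.continuous_fderiv (by simp)).clm_apply continuous_const
  have hψs : HasCompactSupport ψ := hφc.fderiv_apply ℝ (EuclideanSpace.single i 1)
  have hφcont : Continuous φ := hφ.continuous
  have hiu : Integrable (fun x => u x * ψ x) volume :=
    integrable_mul_testfun hΩm hu hu2 hu0 hψcont hψs
  have hiv : Integrable (fun x => v x * ψ x) volume :=
    integrable_mul_testfun hΩm hv hv2 hv0 hψcont hψs
  have hgiu : Integrable (fun x => gu x i * φ x) volume := by
    apply integrable_mul_testfun hΩm (comp_aesm hgu i) (comp_sq_int hgu2 hgu i) ?_ hφcont hφc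
    filter_upwards [hgu0] with x hx h
    simp [hx h]
  have hgiv : Integrable (fun x => gv x i * φ x) volume := by
    apply integrable_mul_testfun hΩm (comp_aesm hgv i) (comp_sq_int hgv2 hgv i) ?_ hφcont hφc
    filter_upwards [hgv0] with x hx h
    simp [hx h]
  have h1 := hwu φ hφ hφc i
  have h2 := hwv φ hφ hφc i
  have e1 : ∫ x, (u x - v x) * ψ x = (∫ x, u x * ψ x) - ∫ x, v x * ψ x := by
    rw [← integral_sub hiu hiv]
    congr 1; funext x; ring
  have e2 : ∫ x, (gu x - gv x) i * φ x = (∫ x, gu x i * φ x) - ∫ x, gv x i * φ x := by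
    rw [← integral_sub hgiu hgiv]
    congr 1; funext x
    have : (gu x - gv x) i = gu x i - gv x i := rfl
    rw [this]; ring
  show ∫ x, (u x - v x) * ψ x = - ∫ x, (fun x => gu x - gv x) x i * φ x
  rw [e1, show (fun x => ((fun x => gu x - gv x) x) i * φ x) = fun x => (gu x - gv x) i * φ x
    from rfl, e2, h1, h2]
  ring

lemma extract_int {μ : EuclideanSpace ℝ (Fin N) → ℝ} {q : ℝ} (hq0 : 0 ≤ q)
    (hμae : ∀ᵐ x ∂(volume.restrict Ω), 0 ≤ μ x)
    (hμm : AEStronglyMeasurable μ (volume.restrict Ω))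
    {h : EuclideanSpace ℝ (Fin N) → ℝ}
    (hm : AEStronglyMeasurable h (volume.restrict Ω)) (hnn : ∀ x, 0 ≤ h x)
    (hint : IntegrableOn (fun x => h x ^ (2:ℝ) + μ x * h x ^ q) Ω volume) :
    IntegrableOn (fun x => h x ^ 2) Ω volume ∧
      IntegrableOn (fun x => μ x * h x ^ q) Ω volume := by
  have hm2 : AEStronglyMeasurable (fun x => h x ^ 2) (volume.restrict Ω) :=
    (hm.mul hm).congr (Filter.Eventually.of_forall fun x => (pow_two (h x)).symm)
  have hmq : AEStronglyMeasurable (fun x => μ x * h x ^ q) (volume.restrict Ω) :=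
    hμm.mul ((Real.continuous_rpow_const hq0).comp_aestronglyMeasurable hm)
  constructor
  · apply Integrable.mono' hint hm2
    filter_upwards [hμae] with x hx
    have h1 : 0 ≤ μ x * h x ^ q := mul_nonneg hx (Real.rpow_nonneg (hnn x) q)
    rw [Real.norm_eq_abs, abs_of_nonneg (by positivity), ← Real.rpow_two]
    linarith
  · apply Integrable.mono' hint hmq
    filter_upwards [hμae] with x hx
    have h1 : 0 ≤ μ x * h x ^ q := mul_nonneg hx (Real.rpow_nonneg (hnn x) q)
    rw [Real.norm_eq_abs, abs_of_nonneg h1]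
    have h2 : 0 ≤ h x ^ (2:ℝ) := Real.rpow_nonneg (hnn x) _
    linarith

lemma poincare (Ω : Set (EuclideanSpace ℝ (Fin N))) (q lam : ℝ)
    (hlam : lam = sInf {r : ℝ | ∃ u g, MemW0H Ω 2 q (fun _ => 0) u g ∧
      (∫ x in Ω, |u x| ^ (2 : ℝ)) = 1 ∧ r = ∫ x in Ω, ‖g x‖ ^ (2 : ℝ)})
    (w : EuclideanSpace ℝ (Fin N) → ℝ) (gw : EuclideanSpace ℝ (Fin N) → EuclideanSpace ℝ (Fin N))
    (hmem : MemW0H Ω 2 q (fun _ => 0) w gw) :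
    lam * ∫ x in Ω, |w x| ^ (2:ℝ) ≤ ∫ x in Ω, ‖gw x‖ ^ (2:ℝ) := by
  obtain ⟨hm1, hm2, hm3, hm4, hm5, hm6, hm7⟩ := hmem
  have hbdd : BddBelow {r : ℝ | ∃ u g, MemW0H Ω 2 q (fun _ => 0) u g ∧
      (∫ x in Ω, |u x| ^ (2 : ℝ)) = 1 ∧ r = ∫ x in Ω, ‖g x‖ ^ (2 : ℝ)} := by
    refine ⟨0, ?_⟩
    rintro r ⟨u', g', _, _, rfl⟩
    exact integral_nonneg fun x => Real.rpow_nonneg (norm_nonneg _) _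
  set T := ∫ x in Ω, |w x| ^ (2:ℝ) with hTdef
  set S := ∫ x in Ω, ‖gw x‖ ^ (2:ℝ) with hSdef
  have hT0 : 0 ≤ T := integral_nonneg fun x => Real.rpow_nonneg (abs_nonneg _) _
  have hS0 : 0 ≤ S := integral_nonneg fun x => Real.rpow_nonneg (norm_nonneg _) _
  rcases eq_or_lt_of_le hT0 with h0 | hTpos
  · rw [← h0, mul_zero]; exact hS0
  · set c := T ^ (-(1/2) : ℝ) with hcdef
    have hcpos : 0 < c := Real.rpow_pos_of_pos hTpos _
    have hc2 : c ^ (2:ℝ) = T⁻¹ := by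
      rw [hcdef, ← Real.rpow_mul hT0]
      norm_num [Real.rpow_neg_one]
    have hw2int : IntegrableOn (fun x => |w x| ^ (2:ℝ)) Ω volume :=
      hm6.congr (Filter.Eventually.of_forall fun x => by simp)
    have hgw2int : IntegrableOn (fun x => ‖gw x‖ ^ (2:ℝ)) Ω volume :=
      hm7.congr (Filter.Eventually.of_forall fun x => by simp)
    have hsmulmem : MemW0H Ω 2 q (fun _ => 0) (fun x => c * w x) (fun x => c • gw x) := by
      refine ⟨hm1.const_mul c, hm2.const_smul c, ?_, ?_, ?_, ?_, ?_⟩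
      · intro φ hφ hφc i
        have h := hm3 φ hφ hφc i
        have e1 : ∫ x, (c * w x) * fderiv ℝ φ x (EuclideanSpace.single i 1)
            = c * ∫ x, w x * fderiv ℝ φ x (EuclideanSpace.single i 1) := by
          rw [← integral_const_mul]
          congr 1; funext x; ring
        have e2 : ∫ x, (fun x => c • gw x) x i * φ x = c * ∫ x, gw x i * φ x := by
          rw [← integral_const_mul]
          congr 1; funext x
          show (c • gw x) i * φ x = _
          rw [PiLp.smul_apply, smul_eq_mul]; ring
        rw [e1, e2, h]; ring
      · filter_upwards [hm4] with x hx h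
        rw [hx h, mul_zero]
      · filter_upwards [hm5] with x hx h
        rw [hx h, smul_zero]
      · apply Integrable.congr (hw2int.const_mul (|c| ^ (2:ℝ)))
        refine Filter.Eventually.of_forall fun x => ?_
        show |c| ^ (2:ℝ) * |w x| ^ (2:ℝ) = |c * w x| ^ (2:ℝ) + 0 * |c * w x| ^ q
        rw [abs_mul, Real.mul_rpow (abs_nonneg c) (abs_nonneg (w x)), zero_mul, add_zero]
      · apply Integrable.congr (hgw2int.const_mul (|c| ^ (2:ℝ)))
        refine Filter.Eventually.of_forall fun x => ?_
        show |c| ^ (2:ℝ) * ‖gw x‖ ^ (2:ℝ) = ‖c • gw x‖ ^ (2:ℝ) + 0 * ‖c • gw x‖ ^ q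
        rw [norm_smul, Real.norm_eq_abs,
          Real.mul_rpow (abs_nonneg c) (norm_nonneg (gw x)), zero_mul, add_zero]
    have hnorm1 : (∫ x in Ω, |(fun x => c * w x) x| ^ (2:ℝ)) = 1 := by
      have e : (∫ x in Ω, |c * w x| ^ (2:ℝ)) = c ^ (2:ℝ) * T := by
        rw [hTdef, ← integral_const_mul]
        apply integral_congr_ae
        refine Filter.Eventually.of_forall fun x => ?_
        show |c * w x| ^ (2:ℝ) = c ^ (2:ℝ) * |w x| ^ (2:ℝ)
        rw [abs_mul, Real.mul_rpow (abs_nonneg c) (abs_nonneg (w x)), abs_of_pos hcpos]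
      show (∫ x in Ω, |c * w x| ^ (2:ℝ)) = 1
      rw [e, hc2]
      exact inv_mul_cancel₀ (ne_of_gt hTpos)
    have hval : (∫ x in Ω, ‖(fun x => c • gw x) x‖ ^ (2:ℝ)) = T⁻¹ * S := by
      have e : (∫ x in Ω, ‖c • gw x‖ ^ (2:ℝ)) = c ^ (2:ℝ) * S := by
        rw [hSdef, ← integral_const_mul]
        apply integral_congr_ae
        refine Filter.Eventually.of_forall fun x => ?_
        show ‖c • gw x‖ ^ (2:ℝ) = c ^ (2:ℝ) * ‖gw x‖ ^ (2:ℝ)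
        rw [norm_smul, Real.norm_eq_abs,
          Real.mul_rpow (abs_nonneg c) (norm_nonneg (gw x)), abs_of_pos hcpos]
      show (∫ x in Ω, ‖c • gw x‖ ^ (2:ℝ)) = T⁻¹ * S
      rw [e, hc2]
    have hmemset : T⁻¹ * S ∈ {r : ℝ | ∃ u g, MemW0H Ω 2 q (fun _ => 0) u g ∧
        (∫ x in Ω, |u x| ^ (2 : ℝ)) = 1 ∧ r = ∫ x in Ω, ‖g x‖ ^ (2 : ℝ)} :=
      ⟨fun x => c * w x, fun x => c • gw x, hsmulmem, hnorm1, hval.symm⟩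
    have hle : lam ≤ T⁻¹ * S := by
      rw [hlam]; exact csInf_le hbdd hmemset
    have := mul_le_mul_of_nonneg_right hle hT0
    calc lam * T ≤ T⁻¹ * S * T := this
      _ = S := by field_simp

lemma integrable_inner_form {μ : EuclideanSpace ℝ (Fin N) → ℝ} {q : ℝ} (hq : 2 < q)
    (hμae : ∀ᵐ x ∂(volume.restrict Ω), 0 ≤ μ x)
    (hμm : AEStronglyMeasurable μ (volume.restrict Ω))
    {ga gw : EuclideanSpace ℝ (Fin N) → EuclideanSpace ℝ (Fin N)}
    (hga : AEStronglyMeasurable ga volume) (hgw : AEStronglyMeasurable gw volume)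
    (iga2 : IntegrableOn (fun x => ‖ga x‖ ^ 2) Ω volume)
    (igw2 : IntegrableOn (fun x => ‖gw x‖ ^ 2) Ω volume)
    (iμga : IntegrableOn (fun x => μ x * ‖ga x‖ ^ q) Ω volume)
    (iμgw : IntegrableOn (fun x => μ x * ‖gw x‖ ^ q) Ω volume) :
    Integrable (fun x => ⟪ga x + (μ x * ‖ga x‖ ^ (q - 2)) • ga x, gw x⟫)
      (volume.restrict Ω) := by
  have hmeas : AEStronglyMeasurable
      (fun x => ⟪ga x + (μ x * ‖ga x‖ ^ (q - 2)) • ga x, gw x⟫) (volume.restrict Ω) := by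
    apply AEStronglyMeasurable.inner ?_ hgw.restrict
    apply hga.restrict.add
    apply AEStronglyMeasurable.smul (f := fun x => μ x * ‖ga x‖ ^ (q - 2)) ?_ hga.restrict
    exact hμm.mul ((Real.continuous_rpow_const (by linarith)).comp_aestronglyMeasurable
      hga.restrict.norm)
  apply Integrable.mono' (((iga2.add igw2).add (iμga.add iμgw))) hmeas
  filter_upwards [hμae] with x hx
  have hA : (0:ℝ) ≤ ‖ga x‖ := norm_nonneg _
  have hG : (0:ℝ) ≤ ‖gw x‖ := norm_nonneg _
  have hc : (0:ℝ) ≤ μ x * ‖ga x‖ ^ (q - 2) := mul_nonneg hx (Real.rpow_nonneg hA _)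
  have hPux : ⟪ga x + (μ x * ‖ga x‖ ^ (q - 2)) • ga x, gw x⟫
      = ⟪ga x, gw x⟫ + (μ x * ‖ga x‖ ^ (q - 2)) * ⟪ga x, gw x⟫ := by
    rw [inner_add_left, real_inner_smul_left]
  have hin : |⟪ga x, gw x⟫| ≤ ‖ga x‖ * ‖gw x‖ := abs_real_inner_le_norm _ _
  show ‖⟪ga x + (μ x * ‖ga x‖ ^ (q - 2)) • ga x, gw x⟫‖
      ≤ ‖ga x‖ ^ 2 + ‖gw x‖ ^ 2 + (μ x * ‖ga x‖ ^ q + μ x * ‖gw x‖ ^ q)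
  rw [Real.norm_eq_abs, hPux]
  have step1 : |⟪ga x, gw x⟫ + (μ x * ‖ga x‖ ^ (q - 2)) * ⟪ga x, gw x⟫|
      ≤ ‖ga x‖ * ‖gw x‖ + (μ x * ‖ga x‖ ^ (q - 2)) * (‖ga x‖ * ‖gw x‖) := by
    refine (abs_add_le _ _).trans ?_
    have h1 : |(μ x * ‖ga x‖ ^ (q - 2)) * ⟪ga x, gw x⟫|
        = (μ x * ‖ga x‖ ^ (q - 2)) * |⟪ga x, gw x⟫| := by
      rw [abs_mul, abs_of_nonneg hc]
    rw [h1]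
    exact add_le_add hin (mul_le_mul_of_nonneg_left hin hc)
  refine step1.trans ?_
  have e1 : (μ x * ‖ga x‖ ^ (q - 2)) * (‖ga x‖ * ‖gw x‖)
      = μ x * ((‖ga x‖ ^ (q - 2) * ‖ga x‖) * ‖gw x‖) := by ring
  rw [e1, rpow_sub_two_mul hA hq]
  have h2 : ‖ga x‖ ^ (q-1) * ‖gw x‖ ≤ ‖ga x‖ ^ q + ‖gw x‖ ^ q :=
    rpow_pred_mul_le hA hG (by linarith)
  have h3 := mul_le_mul_of_nonneg_left h2 hx
  have h4 := ab_le_sq_add_sq hA hG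
  nlinarith

lemma integrable_norm_mul_abs
    {w : EuclideanSpace ℝ (Fin N) → ℝ} {gw : EuclideanSpace ℝ (Fin N) → EuclideanSpace ℝ (Fin N)}
    (hw : AEStronglyMeasurable w volume) (hgw : AEStronglyMeasurable gw volume)
    (iw2 : IntegrableOn (fun x => |w x| ^ 2) Ω volume)
    (igw2 : IntegrableOn (fun x => ‖gw x‖ ^ 2) Ω volume) :
    Integrable (fun x => ‖gw x‖ * |w x|) (volume.restrict Ω) := by
  apply Integrable.mono' (igw2.add iw2) (hgw.restrict.norm.mul hw.restrict.norm)
  filter_upwards with x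
  show ‖‖gw x‖ * |w x|‖ ≤ ‖gw x‖ ^ 2 + |w x| ^ 2
  rw [Real.norm_eq_abs, abs_of_nonneg (by positivity)]
  exact ab_le_sq_add_sq (norm_nonneg _) (abs_nonneg _)

end DPHelpers2

open scoped RealInnerProductSpace

set_option maxHeartbeats 4000000 in
/-- Uniqueness of the weak solution to the double phase problem with convection term
in the case `p = 2`: `-div(∇u + μ(x)|∇u|^{q-2}∇u) = f(x, u, ∇u)` in `Ω`, `u = 0` on
`∂Ω`, under (H), (U1), (U2) with `c₁λ₁₂⁻¹ + c₂λ₁₂^{-1/2} < 1`. -/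
theorem double_phase_convection_uniqueness {N : ℕ} (hN : 2 ≤ N)
    (Ω : Set (EuclideanSpace ℝ (Fin N)))
    (hΩ : Bornology.IsBounded Ω) (hΩo : IsOpen Ω) (hΩne : Ω.Nonempty)
    (q : ℝ) (hq : 2 < q) (hqN : q < N) (hqpN : q / 2 < 1 + 1 / N)
    (K : NNReal) (μ : EuclideanSpace ℝ (Fin N) → ℝ)
    (hμL : LipschitzOnWith K μ (closure Ω)) (hμ0 : ∀ x ∈ closure Ω, 0 ≤ μ x)
    (f : EuclideanSpace ℝ (Fin N) → ℝ → EuclideanSpace ℝ (Fin N) → ℝ)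
    -- f is a Carathéodory function:
    (hfmeas : ∀ (s : ℝ) (ξ : EuclideanSpace ℝ (Fin N)), Measurable (fun x => f x s ξ))
    (hfcont : ∀ x, Continuous (fun sξ : ℝ × EuclideanSpace ℝ (Fin N) => f x sξ.1 sξ.2))
    -- (H)(i) growth condition (with p = 2):
    (q1 : ℝ) (hq1 : 1 < q1) (hq1crit : q1 < N * 2 / (N - 2))
    (a1 a2 : ℝ) (ha1 : 0 ≤ a1) (ha2 : 0 ≤ a2)
    (α : EuclideanSpace ℝ (Fin N) → ℝ) (hαm : Measurable α)
    (hα : MeasureTheory.IntegrableOn (fun x => |α x| ^ (q1 / (q1 - 1))) Ω)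
    (hgrowth : ∀ x ∈ Ω, ∀ (s : ℝ) (ξ : EuclideanSpace ℝ (Fin N)),
      |f x s ξ| ≤ a1 * ‖ξ‖ ^ (2 * (q1 - 1) / q1) + a2 * |s| ^ (q1 - 1) + α x)
    -- (H)(ii) sign condition (with p = 2):
    (b1 b2 : ℝ) (hb1 : 0 ≤ b1) (hb2 : 0 ≤ b2)
    (ω : EuclideanSpace ℝ (Fin N) → ℝ) (hω : MeasureTheory.IntegrableOn ω Ω)
    (hsign : ∀ x ∈ Ω, ∀ (s : ℝ) (ξ : EuclideanSpace ℝ (Fin N)),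
      f x s ξ * s ≤ b1 * ‖ξ‖ ^ (2 : ℝ) + b2 * |s| ^ (2 : ℝ) + ω x)
    -- the first Dirichlet eigenvalue of the Laplacian on Ω:
    (lam : ℝ) (hlam_pos : 0 < lam)
    (hlam : lam = sInf {r : ℝ | ∃ u g, MemW0H Ω 2 q (fun _ => 0) u g ∧
      (∫ x in Ω, |u x| ^ (2 : ℝ)) = 1 ∧ r = ∫ x in Ω, ‖g x‖ ^ (2 : ℝ)})
    (hb : b1 + b2 * lam⁻¹ < 1)
    -- (U1):
    (c1 c2 : ℝ) (hc1 : 0 ≤ c1) (hc2 : 0 ≤ c2)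
    (hU1 : ∀ x ∈ Ω, ∀ (s t : ℝ) (ξ : EuclideanSpace ℝ (Fin N)),
      (f x s ξ - f x t ξ) * (s - t) ≤ c1 * |s - t| ^ 2)
    -- (U2):
    (r' : ℝ) (hr'1 : 1 < r') (hr'2 : r' < N * 2 / (N - 2))
    (ρ : EuclideanSpace ℝ (Fin N) → ℝ) (hρm : Measurable ρ)
    (hρ : MeasureTheory.IntegrableOn (fun x => |ρ x| ^ r') Ω)
    (hU2lin : ∀ x ∈ Ω, ∀ s : ℝ,
      IsLinearMap ℝ (fun ξ : EuclideanSpace ℝ (Fin N) => f x s ξ - ρ x))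
    (hU2bound : ∀ x ∈ Ω, ∀ (s : ℝ) (ξ : EuclideanSpace ℝ (Fin N)),
      |f x s ξ - ρ x| ≤ c2 * ‖ξ‖)
    (hsmall : c1 * lam⁻¹ + c2 * lam ^ (-(1 / 2) : ℝ) < 1) :
    -- at most one weak solution:
    ∀ u gu v gv, MemW0H Ω 2 q μ u gu → MemW0H Ω 2 q μ v gv →
      (∀ φ gφ, MemW0H Ω 2 q μ φ gφ →
        (∫ x in Ω, ⟪gu x + (μ x * ‖gu x‖ ^ (q - 2)) • gu x, gφ x⟫) =
          ∫ x in Ω, f x (u x) (gu x) * φ x) →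
      (∀ φ gφ, MemW0H Ω 2 q μ φ gφ →
        (∫ x in Ω, ⟪gv x + (μ x * ‖gv x‖ ^ (q - 2)) • gv x, gφ x⟫) =
          ∫ x in Ω, f x (v x) (gv x) * φ x) →
      ∀ᵐ x ∂(MeasureTheory.volume.restrict Ω), u x = v x := by
  intro u gu v gv hu hv hwu hwv
  obtain ⟨hum, hgum, huwg, hu0, hgu0, huint, hguint⟩ := hu
  obtain ⟨hvm, hgvm, hvwg, hv0, hgv0, hvint, hgvint⟩ := hv
  have hΩm : MeasurableSet Ω := hΩo.measurableSet
  have hq0 : (0:ℝ) ≤ q := by linarith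
  have hμae : ∀ᵐ x ∂(volume.restrict Ω), 0 ≤ μ x :=
    (ae_restrict_iff' hΩm).2 (Filter.Eventually.of_forall fun x hx => hμ0 x (subset_closure hx))
  have hμm : AEStronglyMeasurable μ (volume.restrict Ω) :=
    (hμL.continuousOn.mono subset_closure).aestronglyMeasurable hΩm
  obtain ⟨iu2, iμu⟩ := extract_int hq0 hμae hμm hum.restrict.norm
    (fun x => abs_nonneg (u x)) huint
  obtain ⟨iv2, iμv⟩ := extract_int hq0 hμae hμm hvm.restrict.norm
    (fun x => abs_nonneg (v x)) hvint
  obtain ⟨igu2, iμgu⟩ := extract_int hq0 hμae hμm hgum.restrict.norm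
    (fun x => norm_nonneg (gu x)) hguint
  obtain ⟨igv2, iμgv⟩ := extract_int hq0 hμae hμm hgvm.restrict.norm
    (fun x => norm_nonneg (gv x)) hgvint
  set w : EuclideanSpace ℝ (Fin N) → ℝ := fun x => u x - v x with hwdef
  set gw : EuclideanSpace ℝ (Fin N) → EuclideanSpace ℝ (Fin N) := fun x => gu x - gv x
    with hgwdef
  have hwm : AEStronglyMeasurable w volume := hum.sub hvm
  have hgwm : AEStronglyMeasurable gw volume := hgum.sub hgvm
  have hw0' : ∀ᵐ x ∂(volume : Measure (EuclideanSpace ℝ (Fin N))), x ∉ Ω → w x = 0 := by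
    filter_upwards [hu0, hv0] with x h1 h2 h3
    simp only [hwdef]
    rw [h1 h3, h2 h3, sub_zero]
  have hgw0' : ∀ᵐ x ∂(volume : Measure (EuclideanSpace ℝ (Fin N))), x ∉ Ω → gw x = 0 := by
    filter_upwards [hgu0, hgv0] with x h1 h2 h3
    simp only [hgwdef]
    rw [h1 h3, h2 h3, sub_zero]
  have iw2 : IntegrableOn (fun x => |w x| ^ 2) Ω volume := by
    apply Integrable.mono' ((iu2.add iv2).const_mul 2)
      ((hwm.restrict.norm.mul hwm.restrict.norm).congr
        (Filter.Eventually.of_forall fun x => (pow_two _).symm))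
    filter_upwards with x
    show ‖|w x| ^ 2‖ ≤ 2 * (|u x| ^ 2 + |v x| ^ 2)
    rw [Real.norm_eq_abs, abs_of_nonneg (by positivity)]
    have habs : |w x| ≤ |u x| + |v x| := by simp only [hwdef]; exact abs_sub _ _
    nlinarith [abs_nonneg (w x), abs_nonneg (u x), abs_nonneg (v x),
      sq_nonneg (|u x| - |v x|)]
  have igw2 : IntegrableOn (fun x => ‖gw x‖ ^ 2) Ω volume := by
    apply Integrable.mono' ((igu2.add igv2).const_mul 2)
      ((hgwm.restrict.norm.mul hgwm.restrict.norm).congr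
        (Filter.Eventually.of_forall fun x => (pow_two _).symm))
    filter_upwards with x
    show ‖‖gw x‖ ^ 2‖ ≤ 2 * (‖gu x‖ ^ 2 + ‖gv x‖ ^ 2)
    rw [Real.norm_eq_abs, abs_of_nonneg (by positivity)]
    have habs : ‖gw x‖ ≤ ‖gu x‖ + ‖gv x‖ := by simp only [hgwdef]; exact norm_sub_le _ _
    nlinarith [norm_nonneg (gw x), norm_nonneg (gu x), norm_nonneg (gv x),
      sq_nonneg (‖gu x‖ - ‖gv x‖)]
  have iμw : IntegrableOn (fun x => μ x * |w x| ^ q) Ω volume := by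
    apply Integrable.mono' ((iμu.const_mul (2^q)).add (iμv.const_mul (2^q)))
      (hμm.mul ((Real.continuous_rpow_const hq0).comp_aestronglyMeasurable
        hwm.restrict.norm))
    filter_upwards [hμae] with x hx
    have habs : |w x| ≤ |u x| + |v x| := by simp only [hwdef]; exact abs_sub _ _
    have h2 : |w x| ^ q ≤ (|u x| + |v x|) ^ q := Real.rpow_le_rpow (abs_nonneg _) habs hq0
    have h3 := add_rpow_le_two_rpow (abs_nonneg (u x)) (abs_nonneg (v x)) hq0
    have h4 : μ x * |w x| ^ q ≤ μ x * (2 ^ q * (|u x| ^ q + |v x| ^ q)) :=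
      mul_le_mul_of_nonneg_left (h2.trans h3) hx
    show ‖μ x * |w x| ^ q‖ ≤ 2 ^ q * (μ x * |u x| ^ q) + 2 ^ q * (μ x * |v x| ^ q)
    rw [Real.norm_eq_abs,
      abs_of_nonneg (mul_nonneg hx (Real.rpow_nonneg (abs_nonneg _) q))]
    nlinarith [h4]
  have iμgw : IntegrableOn (fun x => μ x * ‖gw x‖ ^ q) Ω volume := by
    apply Integrable.mono' ((iμgu.const_mul (2^q)).add (iμgv.const_mul (2^q)))
      (hμm.mul ((Real.continuous_rpow_const hq0).comp_aestronglyMeasurable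
        hgwm.restrict.norm))
    filter_upwards [hμae] with x hx
    have habs : ‖gw x‖ ≤ ‖gu x‖ + ‖gv x‖ := by simp only [hgwdef]; exact norm_sub_le _ _
    have h2 : ‖gw x‖ ^ q ≤ (‖gu x‖ + ‖gv x‖) ^ q :=
      Real.rpow_le_rpow (norm_nonneg _) habs hq0
    have h3 := add_rpow_le_two_rpow (norm_nonneg (gu x)) (norm_nonneg (gv x)) hq0
    have h4 : μ x * ‖gw x‖ ^ q ≤ μ x * (2 ^ q * (‖gu x‖ ^ q + ‖gv x‖ ^ q)) :=
      mul_le_mul_of_nonneg_left (h2.trans h3) hx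
    show ‖μ x * ‖gw x‖ ^ q‖ ≤ 2 ^ q * (μ x * ‖gu x‖ ^ q) + 2 ^ q * (μ x * ‖gv x‖ ^ q)
    rw [Real.norm_eq_abs,
      abs_of_nonneg (mul_nonneg hx (Real.rpow_nonneg (norm_nonneg _) q))]
    nlinarith [h4]
  have hwgw : IsWeakGrad w gw := by
    rw [hwdef, hgwdef]
    exact isWeakGrad_sub hΩm hum hvm hgum hgvm iu2 iv2 igu2 igv2 hu0 hv0 hgu0 hgv0 huwg hvwg
  have hww : MemW0H Ω 2 q μ w gw :=
    ⟨hwm, hgwm, hwgw, hw0', hgw0',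
      (iw2.add iμw).congr (Filter.Eventually.of_forall fun x => by simp [Real.rpow_two]),
      (igw2.add iμgw).congr (Filter.Eventually.of_forall fun x => by simp [Real.rpow_two])⟩
  have hw0mem : MemW0H Ω 2 q (fun _ => 0) w gw :=
    ⟨hwm, hgwm, hwgw, hw0', hgw0',
      iw2.congr (Filter.Eventually.of_forall fun x => by simp [Real.rpow_two]),
      igw2.congr (Filter.Eventually.of_forall fun x => by simp [Real.rpow_two])⟩
  have EqU := hwu w gw hww
  have EqV := hwv w gw hww
  have iPu := integrable_inner_form hq hμae hμm hgum hgwm igu2 igw2 iμgu iμgw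
  have iPv := integrable_inner_form hq hμae hμm hgvm hgwm igv2 igw2 iμgv iμgw
  have hkey : ∀ᵐ x ∂(volume.restrict Ω), ‖gw x‖ ^ (2:ℝ)
      ≤ ⟪gu x + (μ x * ‖gu x‖ ^ (q - 2)) • gu x, gw x⟫
        - ⟪gv x + (μ x * ‖gv x‖ ^ (q - 2)) • gv x, gw x⟫ := by
    filter_upwards [hμae] with x hx
    have hgweq : gw x = gu x - gv x := by simp only [hgwdef]
    have expand : ⟪gu x + (μ x * ‖gu x‖ ^ (q - 2)) • gu x, gw x⟫
        - ⟪gv x + (μ x * ‖gv x‖ ^ (q - 2)) • gv x, gw x⟫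
        = ⟪gu x - gv x, gw x⟫
          + μ x * ⟪(‖gu x‖ ^ (q - 2)) • gu x - (‖gv x‖ ^ (q - 2)) • gv x, gw x⟫ := by
      simp only [inner_add_left, inner_sub_left, real_inner_smul_left]
      ring
    rw [Real.rpow_two, expand, hgweq]
    have h2 : 0 ≤ ⟪(‖gu x‖ ^ (q - 2)) • gu x - (‖gv x‖ ^ (q - 2)) • gv x, gu x - gv x⟫ :=
      inner_rpow_smul_sub_nonneg (gu x) (gv x) (by linarith)
    have h3 : ⟪gu x - gv x, gu x - gv x⟫ = ‖gu x - gv x‖ ^ 2 := real_inner_self_eq_norm_sq _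
    rw [h3]
    nlinarith [mul_nonneg hx h2]
  have igw2r : Integrable (fun x => ‖gw x‖ ^ (2:ℝ)) (volume.restrict Ω) :=
    igw2.congr (Filter.Eventually.of_forall fun x => by simp [Real.rpow_two])
  have step1 : (∫ x in Ω, ‖gw x‖ ^ (2:ℝ))
      ≤ (∫ x in Ω, ⟪gu x + (μ x * ‖gu x‖ ^ (q - 2)) • gu x, gw x⟫)
        - ∫ x in Ω, ⟪gv x + (μ x * ‖gv x‖ ^ (q - 2)) • gv x, gw x⟫ := by
    rw [← integral_sub iPu iPv]
    exact integral_mono_ae igw2r (iPu.sub iPv) hkey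
  rw [EqU, EqV] at step1
  -- Caratheodory measurability
  have hfum : AEStronglyMeasurable (fun x => f x (u x) (gu x)) volume := by
    have hmk : Measurable fun x => f x (hum.mk u x) (hgum.mk gu x) :=
      measurable_caratheodory hfmeas hfcont hum.stronglyMeasurable_mk.measurable
        hgum.stronglyMeasurable_mk.measurable
    apply hmk.aestronglyMeasurable.congr
    filter_upwards [hum.ae_eq_mk, hgum.ae_eq_mk] with x h1 h2
    rw [← h1, ← h2]
  have hfvm : AEStronglyMeasurable (fun x => f x (v x) (gv x)) volume := by
    have hmk : Measurable fun x => f x (hvm.mk v x) (hgvm.mk gv x) :=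
      measurable_caratheodory hfmeas hfcont hvm.stronglyMeasurable_mk.measurable
        hgvm.stronglyMeasurable_mk.measurable
    apply hmk.aestronglyMeasurable.congr
    filter_upwards [hvm.ae_eq_mk, hgvm.ae_eq_mk] with x h1 h2
    rw [← h1, ← h2]
  have hFdiff : Integrable
      (fun x => f x (u x) (gu x) * w x - f x (v x) (gv x) * w x) (volume.restrict Ω) := by
    apply Integrable.mono' (((igu2.add iw2).const_mul c2).add ((igv2.add iw2).const_mul c2))
      ((hfum.mul hwm).sub (hfvm.mul hwm)).restrict
    filter_upwards [ae_restrict_mem hΩm] with x hx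
    have h1 := hU2bound x hx (u x) (gu x)
    have h2 := hU2bound x hx (v x) (gv x)
    show ‖f x (u x) (gu x) * w x - f x (v x) (gv x) * w x‖
        ≤ c2 * (‖gu x‖ ^ 2 + |w x| ^ 2) + c2 * (‖gv x‖ ^ 2 + |w x| ^ 2)
    rw [Real.norm_eq_abs, show f x (u x) (gu x) * w x - f x (v x) (gv x) * w x
      = (f x (u x) (gu x) - f x (v x) (gv x)) * w x from by ring, abs_mul]
    have h3 : |f x (u x) (gu x) - f x (v x) (gv x)| ≤ c2 * ‖gu x‖ + c2 * ‖gv x‖ := by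
      rw [show f x (u x) (gu x) - f x (v x) (gv x)
        = (f x (u x) (gu x) - ρ x) - (f x (v x) (gv x) - ρ x) from by ring]
      exact (abs_sub _ _).trans (add_le_add h1 h2)
    have h4 := mul_le_mul_of_nonneg_right h3 (abs_nonneg (w x))
    have h5 := ab_le_sq_add_sq (norm_nonneg (gu x)) (abs_nonneg (w x))
    have h6 := ab_le_sq_add_sq (norm_nonneg (gv x)) (abs_nonneg (w x))
    nlinarith [mul_le_mul_of_nonneg_left h5 hc2, mul_le_mul_of_nonneg_left h6 hc2,
      mul_nonneg hc2 (mul_nonneg (norm_nonneg (gu x)) (abs_nonneg (w x))),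
      mul_nonneg hc2 (mul_nonneg (norm_nonneg (gv x)) (abs_nonneg (w x)))]
  have iI : Integrable (fun x => ‖gw x‖ * |w x|) (volume.restrict Ω) :=
    integrable_norm_mul_abs hwm hgwm iw2 igw2
  have iD : Integrable (fun x => c1 * |w x| ^ 2 + c2 * (‖gw x‖ * |w x|))
      (volume.restrict Ω) := (iw2.const_mul c1).add (iI.const_mul c2)
  have step2 : (∫ x in Ω, f x (u x) (gu x) * w x) - (∫ x in Ω, f x (v x) (gv x) * w x)
      ≤ ∫ x in Ω, (c1 * |w x| ^ 2 + c2 * (‖gw x‖ * |w x|)) := by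
    by_cases hFv : Integrable (fun x => f x (v x) (gv x) * w x) (volume.restrict Ω)
    · have hFu : Integrable (fun x => f x (u x) (gu x) * w x) (volume.restrict Ω) :=
        (hFdiff.add hFv).congr (Filter.Eventually.of_forall fun x => by
          simp only [Pi.add_apply]; ring)
      rw [← integral_sub hFu hFv]
      apply integral_mono_ae (hFu.sub hFv) iD
      filter_upwards [ae_restrict_mem hΩm] with x hx
      have hA := hU1 x hx (u x) (v x) (gu x)
      have hlin := hU2lin x hx (v x)
      have hBeq : f x (v x) (gu x - gv x) - ρ x
          = (f x (v x) (gu x) - ρ x) - (f x (v x) (gv x) - ρ x) :=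
        hlin.map_sub (gu x) (gv x)
      have hB := hU2bound x hx (v x) (gu x - gv x)
      have h4 : (f x (v x) (gu x) - f x (v x) (gv x)) * w x ≤ c2 * (‖gw x‖ * |w x|) := by
        have e2 : |f x (v x) (gu x) - f x (v x) (gv x)| ≤ c2 * ‖gu x - gv x‖ := by
          rw [show f x (v x) (gu x) - f x (v x) (gv x)
            = f x (v x) (gu x - gv x) - ρ x from by linarith [hBeq]]
          exact hB
        calc (f x (v x) (gu x) - f x (v x) (gv x)) * w x
            ≤ |(f x (v x) (gu x) - f x (v x) (gv x)) * w x| := le_abs_self _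
          _ = |f x (v x) (gu x) - f x (v x) (gv x)| * |w x| := abs_mul _ _
          _ ≤ (c2 * ‖gu x - gv x‖) * |w x| :=
              mul_le_mul_of_nonneg_right e2 (abs_nonneg _)
          _ = c2 * (‖gw x‖ * |w x|) := by
              simp only [hgwdef]; ring
      have h5 : (f x (u x) (gu x) - f x (v x) (gu x)) * w x ≤ c1 * |w x| ^ 2 := by
        have hwx : w x = u x - v x := by simp only [hwdef]
        rw [hwx]
        exact hA
      show f x (u x) (gu x) * w x - f x (v x) (gv x) * w x
          ≤ c1 * |w x| ^ 2 + c2 * (‖gw x‖ * |w x|)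
      have e : f x (u x) (gu x) * w x - f x (v x) (gv x) * w x
          = (f x (u x) (gu x) - f x (v x) (gu x)) * w x
            + (f x (v x) (gu x) - f x (v x) (gv x)) * w x := by ring
      rw [e]
      linarith
    · have hFu : ¬ Integrable (fun x => f x (u x) (gu x) * w x) (volume.restrict Ω) := by
        intro h
        exact hFv ((h.sub hFdiff).congr (Filter.Eventually.of_forall fun x => by
          simp only [Pi.sub_apply]; ring))
      rw [integral_undef hFu, integral_undef hFv, sub_zero]
      exact integral_nonneg fun x => by positivity
  have hDsplit : (∫ x in Ω, (c1 * |w x| ^ 2 + c2 * (‖gw x‖ * |w x|)))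
      = c1 * (∫ x in Ω, |w x| ^ 2) + c2 * ∫ x in Ω, (‖gw x‖ * |w x|) := by
    rw [integral_add (iw2.const_mul c1) (iI.const_mul c2), integral_const_mul,
      integral_const_mul]
  have hPoin := poincare Ω q lam hlam w gw hw0mem
  have hTr : (∫ x in Ω, |w x| ^ (2:ℝ)) = ∫ x in Ω, |w x| ^ 2 :=
    integral_congr_ae (Filter.Eventually.of_forall fun x => by simp [Real.rpow_two])
  have hSr : (∫ x in Ω, ‖gw x‖ ^ (2:ℝ)) = ∫ x in Ω, ‖gw x‖ ^ 2 :=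
    integral_congr_ae (Filter.Eventually.of_forall fun x => by simp [Real.rpow_two])
  rw [hSr] at step1
  rw [hTr, hSr] at hPoin
  set L := lam ^ (-(1/2) : ℝ) with hLdef
  set T2 := ∫ x in Ω, |w x| ^ 2 with hT2def
  set S2 := ∫ x in Ω, ‖gw x‖ ^ 2 with hS2def
  have hS0 : 0 ≤ S2 := by
    rw [hS2def]; exact integral_nonneg fun x => by positivity
  have hT0 : 0 ≤ T2 := by
    rw [hT2def]; exact integral_nonneg fun x => by positivity
  have hLpos : 0 < L := Real.rpow_pos_of_pos hlam_pos _
  have hLL : L * L = lam⁻¹ := by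
    rw [hLdef, ← Real.rpow_add hlam_pos]
    norm_num [Real.rpow_neg_one]
  set ε := L / 2 with hεdef
  have hεpos : 0 < ε := by rw [hεdef]; positivity
  have hYoung : (∫ x in Ω, (‖gw x‖ * |w x|)) ≤ ε * S2 + (1/(4*ε)) * T2 := by
    have hpt : ∀ᵐ x ∂(volume.restrict Ω),
        ‖gw x‖ * |w x| ≤ ε * ‖gw x‖ ^ 2 + (1/(4*ε)) * |w x| ^ 2 := by
      filter_upwards with x
      have hd : 4 * ε * (1/(4*ε)) = 1 := by field_simp
      nlinarith [sq_nonneg (2 * ε * ‖gw x‖ - |w x|), hεpos, mul_pos hεpos hεpos,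
        sq_nonneg (|w x|), norm_nonneg (gw x), abs_nonneg (w x)]
    have hInt2 : Integrable (fun x => ε * ‖gw x‖ ^ 2 + (1/(4*ε)) * |w x| ^ 2)
        (volume.restrict Ω) := (igw2.const_mul ε).add (iw2.const_mul (1/(4*ε)))
    calc (∫ x in Ω, (‖gw x‖ * |w x|))
        ≤ ∫ x in Ω, (ε * ‖gw x‖ ^ 2 + (1/(4*ε)) * |w x| ^ 2) :=
          integral_mono_ae iI hInt2 hpt
      _ = ε * S2 + (1/(4*ε)) * T2 := by
          rw [integral_add (igw2.const_mul ε) (iw2.const_mul (1/(4*ε))), integral_const_mul,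
            integral_const_mul]
  have hT2le : T2 ≤ lam⁻¹ * S2 := by
    nlinarith [mul_le_mul_of_nonneg_left hPoin (le_of_lt (inv_pos.2 hlam_pos)),
      inv_mul_cancel₀ (ne_of_gt hlam_pos), inv_pos.2 hlam_pos]
  have hc2I : 0 ≤ ∫ x in Ω, (‖gw x‖ * |w x|) := integral_nonneg fun x => by positivity
  have main : S2 ≤ (c1 * lam⁻¹ + c2 * L) * S2 := by
    have h1 : S2 ≤ c1 * T2 + c2 * ∫ x in Ω, (‖gw x‖ * |w x|) := by
      rw [← hDsplit]
      exact step1.trans step2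
    have h2 : c2 * (∫ x in Ω, (‖gw x‖ * |w x|)) ≤ c2 * (ε * S2 + (1/(4*ε)) * T2) :=
      mul_le_mul_of_nonneg_left hYoung hc2
    have k1 : (0:ℝ) ≤ c2 * (1/(4*ε)) := by positivity
    have h3 := mul_le_mul_of_nonneg_left hT2le hc1
    have h4 := mul_le_mul_of_nonneg_left hT2le k1
    have key : S2 ≤ c1 * (lam⁻¹ * S2) + (c2 * ε) * S2 + (c2 * (1/(4*ε))) * (lam⁻¹ * S2) := by
      linarith [h1, h2, h3, h4]
    have efin : c1 * (lam⁻¹ * S2) + (c2 * ε) * S2 + (c2 * (1/(4*ε))) * (lam⁻¹ * S2)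
        = (c1 * lam⁻¹ + c2 * L) * S2 := by
      have hne : L ≠ 0 := ne_of_gt hLpos
      rw [hεdef, ← hLL]
      field_simp
      ring
    rw [efin] at key
    exact key
  have hSeq : S2 = 0 := by
    have hle : S2 ≤ 0 := by nlinarith [main, hsmall, hS0]
    exact le_antisymm hle hS0
  have hT2eq : T2 = 0 := by
    rw [hSeq] at hPoin
    have : T2 ≤ 0 := by nlinarith [hPoin, hlam_pos]
    exact le_antisymm this hT0
  have hzero := (integral_eq_zero_iff_of_nonneg_ae
    (Filter.Eventually.of_forall fun x => pow_nonneg (abs_nonneg (w x)) 2) iw2).1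
    (by rw [← hT2def]; exact hT2eq)
  filter_upwards [hzero] with x hx
  have hwx0 : |w x| ^ 2 = 0 := hx
  have : w x = 0 := by
    have h1 : |w x| = 0 := by nlinarith [abs_nonneg (w x), hwx0]
    exact abs_eq_zero.1 h1
  have hwx : w x = u x - v x := by simp only [hwdef]
  rw [hwx] at this
  linarith [this]
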